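/- arXiv:2403.13724 — 4 statements merged into one kernel-verified Lean document; each statement's English description precedes it below -/
import Mathlib

section
/- Let d ≥ 1 and let p : ℝ^d → [0,∞) be a probability density satisfying an exponential tail bound: there exist C₁, C₂ > 0 with p(x₁) ≤ C₂ exp(−C₁|x₁|) for all x₁ ∈ ℝ^d. Let α, β, σ : [0,1] → ℝ be continuous with α(0) = 1, β(0) = 0, β differentiable at 0 with β'(0) = 0, β_s > 0 for s ∈ (0,1], and σ(0) > 0. Then for every fixed x, x₀ ∈ ℝ^d, lim_{s→0⁺} η₁(s,x,x₀) = ∫_{ℝ^d} x₁ p(x₁) dx₁, i.e. the conditional-mean function η₁ converges to the mean of p as s → 0⁺. -/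
open MeasureTheory Filter Topology

open scoped RealInnerProductSpace

/-!
Expanding the square, `exp (-‖v - β x₁‖² / (2t))` with `v = x - α x₀`, `t = s σ²` is the factor
`exp (-‖v‖² / (2t))`, which does not depend on `x₁` and cancels in the ratio `η₁`, times the tilt
`exp (ρ ⟪v, x₁⟫ - ρ β ‖x₁‖² / 2)` with `ρ = β / t`. Since `β'(0) = 0` and `σ(0) > 0`, `ρ → 0`, so
the tilt tends to `1` pointwise, while for small `s` it grows at most like `exp (C₁ ‖x₁‖ / 2)`,
which the exponential tail of `p` absorbs. Dominated convergence in numerator and denominator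
concludes.
-/

/-- The conditional-mean function `η₁(s,x,x₀)` of the stochastic interpolant, written as a ratio of
Gaussian-smoothed integrals against the density `p`. -/
noncomputable def eta1 {d : ℕ} (p : EuclideanSpace ℝ (Fin d) → ℝ) (αs βs σs s : ℝ)
    (x x₀ : EuclideanSpace ℝ (Fin d)) : EuclideanSpace ℝ (Fin d) :=
  (∫ x₁, p x₁ * Real.exp (-‖x - αs • x₀ - βs • x₁‖ ^ 2 / (2 * s * σs ^ 2)))⁻¹ •
    ∫ x₁, (p x₁ * Real.exp (-‖x - αs • x₀ - βs • x₁‖ ^ 2 / (2 * s * σs ^ 2))) • x₁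

theorem one_add_pow_le_mul_exp {a t : ℝ} (ha : 0 < a) (ht : 0 ≤ t) (N : ℕ) :
    (1 + t) ^ N ≤ (1 + N / a) ^ N * Real.exp (a * t) := by
  rcases N.eq_zero_or_pos with rfl | hN
  · simpa using Real.one_le_exp (by positivity)
  have hN' : (0 : ℝ) < N := by exact_mod_cast hN
  have hlin : 1 + t ≤ (1 + N / a) * Real.exp (a / N * t) := by
    have hexpand : (1 + N / a) * (1 + a / N * t) = 1 + t + N / a + a / N * t := by
      field_simp
      ring
    calc 1 + t ≤ (1 + N / a) * (1 + a / N * t) := by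
          rw [hexpand]
          have : 0 ≤ a / N * t := by positivity
          have : 0 ≤ N / a := by positivity
          linarith
      _ ≤ (1 + N / a) * Real.exp (a / N * t) := by
          gcongr
          linarith [Real.add_one_le_exp (a / N * t)]
  calc (1 + t) ^ N ≤ ((1 + N / a) * Real.exp (a / N * t)) ^ N := by gcongr
    _ = (1 + N / a) ^ N * Real.exp (a * t) := by
        rw [mul_pow, ← Real.exp_nat_mul]
        congr 2
        field_simp

theorem HasDerivWithinAt.tendsto_div_of_eq_zero {f : ℝ → ℝ} {f' : ℝ} {s : Set ℝ}
    (h : HasDerivWithinAt f f' s 0) (h0 : f 0 = 0) :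
    Tendsto (fun t => f t / t) (𝓝[s \ {0}] 0) (𝓝 f') := by
  refine (hasDerivWithinAt_iff_tendsto_slope.1 h).congr fun t => ?_
  simp [slope, h0, div_eq_inv_mul]

section WeightedMean

variable {E : Type*} [NormedAddCommGroup E] [NormedSpace ℝ E] [MeasurableSpace E]

noncomputable def weightedMean (μ : Measure E) (w : E → ℝ) : E :=
  (∫ x, w x ∂μ)⁻¹ • ∫ x, w x • x ∂μ

theorem weightedMean_const_mul (μ : Measure E) (w : E → ℝ) {c : ℝ} (hc : c ≠ 0) :
    weightedMean μ (fun x => c * w x) = weightedMean μ w := by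
  simp only [weightedMean, integral_const_mul]
  simp_rw [mul_smul]
  rw [integral_smul, smul_smul, mul_inv, mul_right_comm, inv_mul_cancel₀ hc, one_mul]

variable [FiniteDimensional ℝ E] [BorelSpace E] {μ : Measure E} [μ.IsAddHaarMeasure]

theorem integrable_one_add_norm_pow_mul_exp_neg_mul_norm (k : ℕ) {a : ℝ} (ha : 0 < a) :
    Integrable (fun x : E => (1 + ‖x‖) ^ k * Real.exp (-(a * ‖x‖))) μ := by
  set n := Module.finrank ℝ E + 1
  set K := (1 + (k + n : ℕ) / a) ^ (k + n)
  refine ((integrable_one_add_norm (μ := μ) (r := n) (by simp [n])).const_mul K).mono'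
    (by fun_prop) (ae_of_all _ fun x => ?_)
  have hx : 0 < 1 + ‖x‖ := by positivity
  rw [Real.norm_of_nonneg (by positivity), Real.rpow_neg hx.le, Real.rpow_natCast,
    ← div_eq_mul_inv, le_div_iff₀ (by positivity)]
  calc (1 + ‖x‖) ^ k * Real.exp (-(a * ‖x‖)) * (1 + ‖x‖) ^ n
      = (1 + ‖x‖) ^ (k + n) * Real.exp (-(a * ‖x‖)) := by ring
    _ ≤ K * Real.exp (a * ‖x‖) * Real.exp (-(a * ‖x‖)) := by
        gcongr
        exact one_add_pow_le_mul_exp ha (norm_nonneg x) _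
    _ = K := by rw [mul_assoc, ← Real.exp_add]; simp

theorem tendsto_integral_smul_of_norm_le_exp {F : Type*} [NormedAddCommGroup F] [NormedSpace ℝ F]
    {ι : Type*} {l : Filter ι} [l.IsCountablyGenerated] {g : ι → E → ℝ} {g₀ : E → ℝ} {f : E → F}
    {a C : ℝ} (ha : 0 < a) (hgm : ∀ᶠ s in l, AEStronglyMeasurable (g s) μ)
    (hg : ∀ᶠ s in l, ∀ x, ‖g s x‖ ≤ C * Real.exp (-(a * ‖x‖)))
    (hlim : ∀ x, Tendsto (fun s => g s x) l (𝓝 (g₀ x)))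
    (hfm : AEStronglyMeasurable f μ) (hf : ∀ x, ‖f x‖ ≤ 1 + ‖x‖) :
    Tendsto (fun s => ∫ x, g s x • f x ∂μ) l (𝓝 (∫ x, g₀ x • f x ∂μ)) := by
  refine tendsto_integral_filter_of_dominated_convergence
    (fun x => C * ((1 + ‖x‖) ^ 1 * Real.exp (-(a * ‖x‖)))) (hgm.mono fun s h => h.smul hfm) ?_
    ((integrable_one_add_norm_pow_mul_exp_neg_mul_norm 1 ha).const_mul C)
    (ae_of_all _ fun x => (hlim x).smul_const (f x))
  filter_upwards [hg] with s hs
  refine ae_of_all _ fun x => ?_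
  rw [norm_smul, pow_one, ← mul_assoc, mul_right_comm]
  exact mul_le_mul (hs x) (hf x) (norm_nonneg _) ((norm_nonneg _).trans (hs x))

theorem tendsto_weightedMean_of_norm_le_exp
    {ι : Type*} {l : Filter ι} [l.IsCountablyGenerated] {g : ι → E → ℝ} {g₀ : E → ℝ}
    {a C : ℝ} (ha : 0 < a) (hgm : ∀ᶠ s in l, AEStronglyMeasurable (g s) μ)
    (hg : ∀ᶠ s in l, ∀ x, ‖g s x‖ ≤ C * Real.exp (-(a * ‖x‖)))
    (hlim : ∀ x, Tendsto (fun s => g s x) l (𝓝 (g₀ x))) (hg₀ : ∫ x, g₀ x ∂μ ≠ 0) :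
    Tendsto (fun s => weightedMean μ (g s)) l (𝓝 (weightedMean μ g₀)) := by
  have hden := tendsto_integral_smul_of_norm_le_exp (f := fun _ => (1 : ℝ)) ha hgm hg hlim
    aestronglyMeasurable_const (fun x => by simp)
  have hnum := tendsto_integral_smul_of_norm_le_exp (f := id) ha hgm hg hlim
    aestronglyMeasurable_id (fun x => by simp)
  simp only [smul_eq_mul, mul_one] at hden
  exact (hden.inv₀ hg₀).smul hnum

end WeightedMean

section GaussianTilt

variable {E : Type*} [NormedAddCommGroup E] [InnerProductSpace ℝ E]

noncomputable def gaussianTilt (ρ b : ℝ) (v x : E) : ℝ :=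
  Real.exp (ρ * ⟪v, x⟫ - ρ * b / 2 * ‖x‖ ^ 2)

theorem exp_neg_norm_sub_smul_sq_div (v x : E) (b : ℝ) {t : ℝ} (ht : t ≠ 0) :
    Real.exp (-‖v - b • x‖ ^ 2 / (2 * t)) =
      Real.exp (-‖v‖ ^ 2 / (2 * t)) * gaussianTilt (b / t) b v x := by
  rw [gaussianTilt, ← Real.exp_add, norm_sub_sq_real, real_inner_smul_right, norm_smul,
    mul_pow, Real.norm_eq_abs, sq_abs]
  congr 1
  field_simp
  ring

theorem gaussianTilt_le {ρ b : ℝ} (hρb : 0 ≤ ρ * b) (v x : E) :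
    gaussianTilt ρ b v x ≤ Real.exp (|ρ| * ‖v‖ * ‖x‖) := by
  refine Real.exp_le_exp.2 ?_
  have hinner : ρ * ⟪v, x⟫ ≤ |ρ| * ‖v‖ * ‖x‖ := by
    rw [mul_assoc]
    exact (le_abs_self _).trans (by rw [abs_mul]; gcongr; exact abs_real_inner_le_norm v x)
  have : 0 ≤ ρ * b / 2 * ‖x‖ ^ 2 := by positivity
  linarith

theorem tendsto_gaussianTilt {ι : Type*} {l : Filter ι} {ρ b : ι → ℝ} {b₀ : ℝ} {v : ι → E}
    {v₀ : E} (hρ : Tendsto ρ l (𝓝 0)) (hb : Tendsto b l (𝓝 b₀)) (hv : Tendsto v l (𝓝 v₀))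
    (x : E) : Tendsto (fun s => gaussianTilt (ρ s) (b s) (v s) x) l (𝓝 1) := by
  have hcont : Continuous fun q : ℝ × ℝ × E => gaussianTilt q.1 q.2.1 q.2.2 x := by
    unfold gaussianTilt
    fun_prop
  simpa [gaussianTilt, Function.comp_def] using
    (hcont.tendsto (0, b₀, v₀)).comp (hρ.prodMk_nhds (hb.prodMk_nhds hv))

variable [FiniteDimensional ℝ E] [MeasurableSpace E] [BorelSpace E] {μ : Measure E}
  [μ.IsAddHaarMeasure]

theorem tendsto_weightedMean_mul_gaussianTilt {ι : Type*} {l : Filter ι} [l.IsCountablyGenerated]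
    {p : E → ℝ} {C₁ C₂ : ℝ} (hC₁ : 0 < C₁) (hpm : AEStronglyMeasurable p μ)
    (htail : ∀ x, |p x| ≤ C₂ * Real.exp (-C₁ * ‖x‖)) (hp : ∫ x, p x ∂μ ≠ 0)
    {ρ b : ι → ℝ} {b₀ : ℝ} {v : ι → E} {v₀ : E} (hρ : Tendsto ρ l (𝓝 0))
    (hb : Tendsto b l (𝓝 b₀)) (hv : Tendsto v l (𝓝 v₀)) (hρb : ∀ᶠ s in l, 0 ≤ ρ s * b s) :
    Tendsto (fun s => weightedMean μ (fun x => p x * gaussianTilt (ρ s) (b s) (v s) x)) l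
      (𝓝 (weightedMean μ p)) := by
  have hsmall : ∀ᶠ s in l, |ρ s| * ‖v s‖ ≤ C₁ / 2 := by
    have : Tendsto (fun s => |ρ s| * ‖v s‖) l (𝓝 0) := by simpa using hρ.abs.mul hv.norm
    exact this.eventually (eventually_le_nhds (half_pos hC₁))
  have hmeas : ∀ s, AEStronglyMeasurable (fun x => p x * gaussianTilt (ρ s) (b s) (v s) x) μ :=
    fun s => hpm.mul (by unfold gaussianTilt; fun_prop : Continuous _).aestronglyMeasurable
  refine tendsto_weightedMean_of_norm_le_exp (C := C₂) (half_pos hC₁) (.of_forall hmeas) ?_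
    (fun x => by simpa using (tendsto_gaussianTilt hρ hb hv x).const_mul (p x)) hp
  filter_upwards [hsmall, hρb] with s hs hsb x
  have htilt : 0 ≤ gaussianTilt (ρ s) (b s) (v s) x := Real.exp_nonneg _
  rw [norm_mul, Real.norm_eq_abs, Real.norm_of_nonneg htilt]
  calc |p x| * gaussianTilt (ρ s) (b s) (v s) x
      ≤ C₂ * Real.exp (-C₁ * ‖x‖) * Real.exp (C₁ / 2 * ‖x‖) := by
        refine mul_le_mul (htail x) ((gaussianTilt_le hsb _ _).trans ?_) (by positivity)
          ((abs_nonneg _).trans (htail x))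
        gcongr
    _ = C₂ * Real.exp (-(C₁ / 2 * ‖x‖)) := by
        rw [mul_assoc, ← Real.exp_add]
        ring_nf

end GaussianTilt

theorem eta1_eq_weightedMean {d : ℕ} (p : EuclideanSpace ℝ (Fin d) → ℝ) (αs βs σs s : ℝ)
    (x x₀ : EuclideanSpace ℝ (Fin d)) (h : s * σs ^ 2 ≠ 0) :
    eta1 p αs βs σs s x x₀ = weightedMean volume
      (fun x₁ => p x₁ * gaussianTilt (βs / (s * σs ^ 2)) βs (x - αs • x₀) x₁) := by
  rw [← weightedMean_const_mul volume _
    (Real.exp_pos (-‖x - αs • x₀‖ ^ 2 / (2 * (s * σs ^ 2)))).ne']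
  change weightedMean volume
    (fun x₁ => p x₁ * Real.exp (-‖x - αs • x₀ - βs • x₁‖ ^ 2 / (2 * s * σs ^ 2))) = _
  congr 1
  ext x₁
  rw [mul_assoc 2, exp_neg_norm_sub_smul_sq_div _ _ _ h]
  ring

theorem eta1_tendsto_mean_general
    (d : ℕ)
    (p : EuclideanSpace ℝ (Fin d) → ℝ) (hp0 : ∀ x₁, 0 ≤ p x₁)
    (hpd : ∫ x₁, p x₁ = 1)
    (C₁ C₂ : ℝ) (hC₁ : 0 < C₁)
    (htail : ∀ x₁, p x₁ ≤ C₂ * Real.exp (-C₁ * ‖x₁‖))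
    (α β σ : ℝ → ℝ)
    (hαc : ContinuousOn α (Set.Icc 0 1))
    (hσc : ContinuousOn σ (Set.Icc 0 1))
    (hα0 : α 0 = 1) (hβ0 : β 0 = 0)
    (hβdiff : HasDerivWithinAt β 0 (Set.Icc 0 1) 0)
    (hσ0 : 0 < σ 0) :
    ∀ x x₀ : EuclideanSpace ℝ (Fin d),
      Tendsto (fun s => eta1 p (α s) (β s) (σ s) s x x₀)
        (nhdsWithin 0 (Set.Ioc 0 1)) (nhds (∫ x₁, p x₁ • x₁)) := by
  intro x x₀
  have hl : 𝓝[Set.Ioc 0 1] (0 : ℝ) ≤ 𝓝[Set.Icc 0 1] 0 := nhdsWithin_mono _ Set.Ioc_subset_Icc_self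
  have h0 : (0 : ℝ) ∈ Set.Icc 0 1 := ⟨le_rfl, zero_le_one⟩
  have hα : Tendsto α (𝓝[Set.Ioc 0 1] 0) (𝓝 1) := by
    have := (hαc 0 h0).mono_left hl
    rwa [hα0] at this
  have hβ : Tendsto β (𝓝[Set.Ioc 0 1] 0) (𝓝 0) := by
    have := hβdiff.continuousWithinAt.mono_left hl
    rwa [hβ0] at this
  have hσ : Tendsto σ (𝓝[Set.Ioc 0 1] 0) (𝓝 (σ 0)) := (hσc 0 h0).mono_left hl
  have hslope : Tendsto (fun s => β s / s) (𝓝[Set.Ioc 0 1] 0) (𝓝 0) := by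
    refine (hβdiff.tendsto_div_of_eq_zero hβ0).mono_left (nhdsWithin_mono _ fun s hs => ?_)
    exact ⟨Set.Ioc_subset_Icc_self hs, hs.1.ne'⟩
  have hρ : Tendsto (fun s => β s / (s * σ s ^ 2)) (𝓝[Set.Ioc 0 1] 0) (𝓝 0) := by
    have := hslope.div (hσ.pow 2) (by positivity)
    rw [zero_div] at this
    exact this.congr fun s => div_div _ _ _
  have hpos : ∀ᶠ s in 𝓝[Set.Ioc 0 1] 0, 0 < s * σ s ^ 2 := by
    filter_upwards [self_mem_nhdsWithin, hσ.eventually (lt_mem_nhds hσ0)] with s hs hσs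
    exact mul_pos hs.1 (pow_pos hσs 2)
  have hp : Integrable p := by
    by_contra h
    simp [integral_undef h] at hpd
  have key := tendsto_weightedMean_mul_gaussianTilt hC₁ hp.aestronglyMeasurable
    (fun x₁ => (abs_of_nonneg (hp0 x₁)).trans_le (htail x₁)) (by rw [hpd]; exact one_ne_zero)
    hρ hβ ((tendsto_const_nhds (x := x)).sub (hα.smul_const x₀))
    (hpos.mono fun s hs => by rw [div_mul_eq_mul_div]; exact div_nonneg (mul_self_nonneg _) hs.le)
  rw [weightedMean, hpd, inv_one, one_smul] at key
  exact key.congr' (hpos.mono fun s hs => (eta1_eq_weightedMean p _ _ _ _ x x₀ hs.ne').symm)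

/-- For a probability density `p` with exponential tails and interpolant
coefficients with `α(0) = 1`, `β(0) = 0`, `β'(0) = 0`, `σ(0) > 0`, the conditional-mean function
`η₁(s,x,x₀)` converges to the mean of `p` as `s → 0⁺`. -/
theorem eta1_tendsto_mean
    (d : ℕ) (hd : 1 ≤ d)
    (p : EuclideanSpace ℝ (Fin d) → ℝ) (hp0 : ∀ x₁, 0 ≤ p x₁)
    (hpd : ∫ x₁, p x₁ = 1)
    (C₁ C₂ : ℝ) (hC₁ : 0 < C₁) (hC₂ : 0 < C₂)
    (htail : ∀ x₁, p x₁ ≤ C₂ * Real.exp (-C₁ * ‖x₁‖))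
    (α β σ : ℝ → ℝ)
    (hαc : ContinuousOn α (Set.Icc 0 1)) (hβc : ContinuousOn β (Set.Icc 0 1))
    (hσc : ContinuousOn σ (Set.Icc 0 1))
    (hα0 : α 0 = 1) (hβ0 : β 0 = 0)
    (hβdiff : HasDerivWithinAt β 0 (Set.Icc 0 1) 0)
    (hβpos : ∀ s ∈ Set.Ioc (0 : ℝ) 1, 0 < β s)
    (hσ0 : 0 < σ 0) :
    ∀ x x₀ : EuclideanSpace ℝ (Fin d),
      Tendsto (fun s => eta1 p (α s) (β s) (σ s) s x x₀)
        (nhdsWithin 0 (Set.Ioc 0 1)) (nhds (∫ x₁, p x₁ • x₁)) :=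
  eta1_tendsto_mean_general d p hp0 hpd C₁ C₂ hC₁ htail α β σ hαc hσc hα0 hβ0 hβdiff hσ0
end

section
/- Fix d ≥ 1, s ∈ (0,1), reals α_s, β_s > 0, σ_s > 0, and set M_s = β_s²/(s σ_s²) > 0 and m_s = β_s/(s σ_s²). Let p : ℝ^d → [0,∞) satisfy an exponential tail bound p(x₁) ≤ C₂ exp(−C₁|x₁|) with C₁, C₂ > 0 and ∫_{ℝ^d} p > 0. For v ∈ ℝ^d define Q(v) = ∫_{ℝ^d} p(x₁) e^{w(x₁,v)} dx₁, R(v) = ∫_{ℝ^d} x₁ p(x₁) e^{w(x₁,v)} dx₁, P(v) = ∫_{ℝ^d} x₁ x₁ᵀ p(x₁) e^{w(x₁,v)} dx₁ where w(x₁,v) = −½ M_s |x₁|² + m_s x₁·v. Then for every x₀ ∈ ℝ^d, the map x ↦ R(x−α_s x₀)/Q(x−α_s x₀) is differentiable on ℝ^d, and its Jacobian at x equals m_s (P(v) Q(v) − R(v) R(v)ᵀ)/Q(v)² with v = x − α_s x₀. -/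
/-!
Write `Q`, `R`, `P` for the integrals of `1`, `x` and `x xᵀ` against `p(x) e^{w(x,v)}`. Since
`M > 0`, the Gaussian factor `e^{-M‖x‖²/2}` absorbs both the tilt `e^{m⟪x,v⟫}` and any polynomial
factor `‖x‖ᵏ`, uniformly for `v` in a ball; so each moment is `p` integrated against a bounded
function and may be differentiated under the integral sign. Differentiating the weight in `v`
brings down `m⟪x, ·⟫`, and the quotient rule gives `D(R/Q) = m (Q ∫⟪x,·⟫x − (∫⟪x,·⟫) R) / Q²`,
whose matrix is `m (Q P − R Rᵀ) / Q²`. Finally `∫ p > 0` makes `p` integrable and `Q > 0`.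
-/

open MeasureTheory
open scoped RealInnerProductSpace

noncomputable section

variable {E F : Type*} [NormedAddCommGroup E] [InnerProductSpace ℝ E]
  [NormedAddCommGroup F] [NormedSpace ℝ F]

def tiltWeight (M m : ℝ) (x v : E) : ℝ := Real.exp (-(1 / 2) * M * ‖x‖ ^ 2 + m * ⟪x, v⟫)

def tiltedMoment [MeasurableSpace E] (μ : Measure E) (p : E → ℝ) (M m : ℝ) (g : E → F) (v : E) :
    F :=
  ∫ x, (p x * tiltWeight M m x v) • g x ∂μ

def tiltedMean [MeasurableSpace E] (μ : Measure E) (p : E → ℝ) (M m : ℝ) (v : E) : E :=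
  (tiltedMoment μ p M m (fun _ => (1 : ℝ)) v)⁻¹ • tiltedMoment μ p M m id v

/-- `(innerSL ℝ x).smulRight y` is the rank-one map `y xᵀ`; with `Q`, `R` the tilted moments of
`1` and `x`, this is the covariance `(Q ∫ x xᵀ − R Rᵀ) / Q²` of the probability measure
proportional to `p x * tiltWeight M m x v`. -/
def tiltedCovariance [MeasurableSpace E] (μ : Measure E) (p : E → ℝ) (M m : ℝ) (v : E) :
    E →L[ℝ] E :=
  (tiltedMoment μ p M m (fun _ => (1 : ℝ)) v ^ 2)⁻¹ •
    (tiltedMoment μ p M m (fun _ => (1 : ℝ)) v •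
        tiltedMoment μ p M m (fun x => (innerSL ℝ x).smulRight x) v -
      (tiltedMoment μ p M m (fun x => (innerSL ℝ x).smulRight (1 : ℝ)) v).smulRight
        (tiltedMoment μ p M m id v))

lemma tiltWeight_pos (M m : ℝ) (x v : E) : 0 < tiltWeight M m x v := Real.exp_pos _

@[fun_prop]
lemma continuous_tiltWeight (M m : ℝ) (v : E) : Continuous fun x : E => tiltWeight M m x v := by
  unfold tiltWeight
  fun_prop

lemma hasFDerivAt_tiltWeight (M m : ℝ) (x v : E) :
    HasFDerivAt (tiltWeight M m x) ((m * tiltWeight M m x v) • innerSL ℝ x) v := by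
  have h := ((((innerSL ℝ x).hasFDerivAt (x := v)).const_mul m).const_add
    (-(1 / 2) * M * ‖x‖ ^ 2)).exp
  rw [smul_smul] at h
  rw [mul_comm m]
  exact h

lemma tiltWeight_mul_pow_le {M : ℝ} (hM : 0 < M) (m : ℝ) {v : E} {c : ℝ} (hv : ‖v‖ ≤ c)
    (x : E) (k : ℕ) :
    tiltWeight M m x v * ‖x‖ ^ k ≤ Real.exp ((k + |m| * c) ^ 2 / (2 * M)) := by
  have hpow : ‖x‖ ^ k ≤ Real.exp (k * ‖x‖) := by
    rw [Real.exp_nat_mul]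
    gcongr
    linarith [Real.add_one_le_exp ‖x‖]
  have htilt : m * ⟪x, v⟫ ≤ |m| * c * ‖x‖ := calc
    m * ⟪x, v⟫ ≤ |m| * |⟪x, v⟫| := (le_abs_self _).trans (abs_mul _ _).le
    _ ≤ |m| * (‖x‖ * c) := by gcongr; exact (abs_real_inner_le_norm x v).trans (by gcongr)
    _ = |m| * c * ‖x‖ := by ring
  have hsq : (k + |m| * c) * ‖x‖ - 1 / 2 * M * ‖x‖ ^ 2 ≤ (k + |m| * c) ^ 2 / (2 * M) := by
    rw [le_div_iff₀ (by positivity)]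
    nlinarith [sq_nonneg (k + |m| * c - M * ‖x‖)]
  calc tiltWeight M m x v * ‖x‖ ^ k
      ≤ tiltWeight M m x v * Real.exp (k * ‖x‖) :=
        mul_le_mul_of_nonneg_left hpow (tiltWeight_pos M m x v).le
    _ ≤ Real.exp ((k + |m| * c) ^ 2 / (2 * M)) := by
        rw [tiltWeight, ← Real.exp_add, Real.exp_le_exp]
        linarith

lemma norm_tiltedIntegrand_le {p : E → ℝ} {M : ℝ} (hM : 0 < M) (m : ℝ) {g : E → F} {k : ℕ}
    (hgk : ∀ x, ‖g x‖ ≤ ‖x‖ ^ k) {v : E} {c : ℝ} (hv : ‖v‖ ≤ c) (x : E) :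
    ‖(p x * tiltWeight M m x v) • g x‖ ≤ ‖p x‖ * Real.exp ((k + |m| * c) ^ 2 / (2 * M)) := by
  have hw := (tiltWeight_pos M m x v).le
  rw [norm_smul, norm_mul, Real.norm_of_nonneg hw, mul_assoc]
  gcongr
  exact (mul_le_mul_of_nonneg_left (hgk x) hw).trans (tiltWeight_mul_pow_le hM m hv x k)

lemma norm_innerSL_smulRight_le {g : E → F} {k : ℕ} (hgk : ∀ x, ‖g x‖ ≤ ‖x‖ ^ k) (x : E) :
    ‖(innerSL ℝ x).smulRight (g x)‖ ≤ ‖x‖ ^ (k + 1) := by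
  rw [ContinuousLinearMap.norm_smulRight_apply, innerSL_apply_norm, pow_succ']
  gcongr
  exact hgk x

lemma continuous_innerSL_smulRight {g : E → F} (hg : Continuous g) :
    Continuous fun x => (innerSL ℝ x).smulRight (g x) := by
  fun_prop

theorem integral_mul_pos_of_pos {α : Type*} [MeasurableSpace α] {μ : Measure α} {p f : α → ℝ}
    (hp0 : ∀ x, 0 ≤ p x) (hppos : 0 < ∫ x, p x ∂μ) (hf : ∀ x, 0 < f x)
    (hint : Integrable (fun x => p x * f x) μ) : 0 < ∫ x, p x * f x ∂μ := by
  have hsupp : Function.support (fun x => p x * f x) = Function.support p := by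
    ext x
    simp [(hf x).ne']
  rw [integral_pos_iff_support_of_nonneg (fun x => mul_nonneg (hp0 x) (hf x).le) hint, hsupp]
  exact (integral_pos_iff_support_of_nonneg hp0 (.of_integral_ne_zero hppos.ne')).mp hppos

section Moments

variable [MeasurableSpace E] [OpensMeasurableSpace E] {μ : Measure E}
  {p : E → ℝ} {M : ℝ} (m : ℝ) {g : E → F} {k : ℕ}

lemma integrable_tiltedIntegrand (hp : Integrable p μ) (hM : 0 < M)
    (hg : AEStronglyMeasurable g μ) (hgk : ∀ x, ‖g x‖ ≤ ‖x‖ ^ k) (v : E) :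
    Integrable (fun x => (p x * tiltWeight M m x v) • g x) μ :=
  (hp.norm.mul_const _).mono'
    ((hp.aestronglyMeasurable.mul (continuous_tiltWeight M m v).aestronglyMeasurable).smul hg)
    (.of_forall (norm_tiltedIntegrand_le hM m hgk le_rfl))

variable [SecondCountableTopology E]

theorem hasFDerivAt_tiltedMoment (hp : Integrable p μ) (hM : 0 < M) (hg : Continuous g)
    (hgk : ∀ x, ‖g x‖ ≤ ‖x‖ ^ k) (v₀ : E) :
    HasFDerivAt (tiltedMoment μ p M m g)
      (m • tiltedMoment μ p M m (fun x => (innerSL ℝ x).smulRight (g x)) v₀) v₀ := by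
  have hint := integrable_tiltedIntegrand m hp hM hg.aestronglyMeasurable hgk
  have hint' := integrable_tiltedIntegrand m hp hM
    (continuous_innerSL_smulRight hg).aestronglyMeasurable (norm_innerSL_smulRight_le hgk)
  unfold tiltedMoment
  rw [← integral_smul]
  refine hasFDerivAt_integral_of_dominated_of_fderiv_le (Metric.ball_mem_nhds v₀ one_pos)
    (F' := fun v x => m • ((p x * tiltWeight M m x v) • (innerSL ℝ x).smulRight (g x)))
    (bound := fun x => |m| * (‖p x‖ * Real.exp ((↑(k + 1) + |m| * (‖v₀‖ + 1)) ^ 2 / (2 * M))))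
    (.of_forall fun v => (hint v).1) (hint v₀) ((hint' v₀).smul m).1
    (.of_forall fun x v hv => ?_) ((hp.norm.mul_const _).const_mul _)
    (.of_forall fun x v _ => ?_)
  · rw [norm_smul, Real.norm_eq_abs]
    gcongr
    exact norm_tiltedIntegrand_le hM m (norm_innerSL_smulRight_le hgk)
      (norm_lt_of_mem_ball hv).le x
  · refine (((hasFDerivAt_tiltWeight M m x v).const_mul (p x)).smul_const (g x)).congr_fderiv ?_
    ext u
    simp only [ContinuousLinearMap.smulRight_apply, smul_apply, innerSL_apply_apply]
    module

lemma tiltedMoment_smulRight_apply (hp : Integrable p μ) (hM : 0 < M) (hg : Continuous g)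
    (hgk : ∀ x, ‖g x‖ ≤ ‖x‖ ^ k) (v u : E) :
    tiltedMoment μ p M m (fun x => (innerSL ℝ x).smulRight (g x)) v u =
      tiltedMoment μ p M m (fun x => ⟪x, u⟫ • g x) v := by
  unfold tiltedMoment
  rw [ContinuousLinearMap.integral_apply (integrable_tiltedIntegrand m hp hM
    (continuous_innerSL_smulRight hg).aestronglyMeasurable (norm_innerSL_smulRight_le hgk) v)]
  rfl

lemma tiltedMoment_innerSL_smulRight_one_apply [CompleteSpace E] (hp : Integrable p μ)
    (hM : 0 < M) (v u : E) :
    tiltedMoment μ p M m (fun x => (innerSL ℝ x).smulRight (1 : ℝ)) v u =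
      ⟪tiltedMoment μ p M m id v, u⟫ := by
  rw [tiltedMoment_smulRight_apply m hp hM (g := fun _ => (1 : ℝ)) continuous_const (k := 0)
      (by simp), real_inner_comm, tiltedMoment, tiltedMoment,
    ← integral_inner (integrable_tiltedIntegrand m hp hM aestronglyMeasurable_id (k := 1)
      (by simp) v)]
  simp only [inner_smul_right, smul_eq_mul, mul_one, id, real_inner_comm]

theorem hasFDerivAt_tiltedMean (hp0 : ∀ x, 0 ≤ p x) (hppos : 0 < ∫ x, p x ∂μ) (hM : 0 < M)
    (v₀ : E) :
    HasFDerivAt (tiltedMean μ p M m) (m • tiltedCovariance μ p M m v₀) v₀ := by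
  have hp : Integrable p μ := .of_integral_ne_zero hppos.ne'
  have hQ := hasFDerivAt_tiltedMoment m hp hM (g := fun _ => (1 : ℝ)) continuous_const (k := 0)
    (by simp) v₀
  have hR := hasFDerivAt_tiltedMoment m hp hM continuous_id (k := 1) (by simp) v₀
  have hint : Integrable (fun x => p x * tiltWeight M m x v₀) μ := by
    simpa using integrable_tiltedIntegrand m hp hM aestronglyMeasurable_const
      (g := fun _ => (1 : ℝ)) (k := 0) (by simp) v₀
  have hQpos : 0 < tiltedMoment μ p M m (fun _ => (1 : ℝ)) v₀ := by
    simpa [tiltedMoment] using integral_mul_pos_of_pos hp0 hppos (tiltWeight_pos M m · v₀) hint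
  refine (((hasDerivAt_inv hQpos.ne').comp_hasFDerivAt v₀ hQ).smul hR).congr_fderiv ?_
  ext u
  simp only [tiltedCovariance, add_apply, sub_apply, smul_apply,
    ContinuousLinearMap.smulRight_apply, Function.comp_apply, smul_eq_mul, id]
  match_scalars <;> field_simp

end Moments

section Euclidean

variable {ι : Type*} [Fintype ι] {μ : Measure (EuclideanSpace ℝ ι)}
  {p : EuclideanSpace ℝ ι → ℝ} {M : ℝ} (m : ℝ)

lemma EuclideanSpace.integral_apply {α : Type*} [MeasurableSpace α] {ν : Measure α}
    {f : α → EuclideanSpace ℝ ι} (hf : Integrable f ν) (i : ι) :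
    (∫ a, f a ∂ν) i = ∫ a, f a i ∂ν :=
  ((EuclideanSpace.proj i).integral_comp_comm hf).symm

lemma tiltedMoment_innerSL_smulRight_self_apply (hp : Integrable p μ) (hM : 0 < M)
    (v u : EuclideanSpace ℝ ι) (i : ι) :
    tiltedMoment μ p M m (fun x => (innerSL ℝ x).smulRight x) v u i =
      ∑ j, tiltedMoment μ p M m (fun x => x i * x j) v * u j := by
  have hentry : ∀ j, Integrable (fun x => (p x * tiltWeight M m x v) • (x i * x j)) μ :=
    fun j => integrable_tiltedIntegrand m hp hM (by fun_prop) (k := 2) (fun x => by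
      rw [norm_mul, sq]
      exact mul_le_mul (PiLp.norm_apply_le x i) (PiLp.norm_apply_le x j) (norm_nonneg _)
        (norm_nonneg _)) v
  have hφ := integrable_tiltedIntegrand m hp hM
    (continuous_innerSL_smulRight continuous_id').aestronglyMeasurable
    (norm_innerSL_smulRight_le (g := fun x => x) (k := 1) (by simp)) v
  rw [tiltedMoment, ContinuousLinearMap.integral_apply hφ,
    EuclideanSpace.integral_apply (hφ.apply_continuousLinearMap u)]
  simp only [tiltedMoment, ← integral_mul_const]
  rw [← integral_finsetSum _ fun j _ => (hentry j).mul_const (u j)]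
  congr 1 with x
  simp only [smul_apply, ContinuousLinearMap.smulRight_apply, innerSL_apply_apply,
    PiLp.smul_apply, smul_eq_mul, PiLp.inner_apply, Real.inner_apply, Finset.sum_mul,
    Finset.mul_sum]
  exact Finset.sum_congr rfl fun j _ => by ring

theorem tiltedCovariance_eq_toEuclideanLin [DecidableEq ι] (hp : Integrable p μ) (hM : 0 < M)
    (v : EuclideanSpace ℝ ι) :
    tiltedCovariance μ p M m v =
      LinearMap.toContinuousLinearMap (Matrix.toEuclideanLin
        ((tiltedMoment μ p M m (fun _ => (1 : ℝ)) v ^ 2)⁻¹ •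
          (tiltedMoment μ p M m (fun _ => (1 : ℝ)) v •
              Matrix.of (fun i j => tiltedMoment μ p M m (fun x => x i * x j) v) -
            Matrix.of fun i j => tiltedMoment μ p M m id v i * tiltedMoment μ p M m id v j))) := by
  rw [tiltedCovariance, map_smul, map_smul]
  congr 1
  ext u i
  simp only [sub_apply, smul_apply, ContinuousLinearMap.smulRight_apply, PiLp.sub_apply,
    PiLp.smul_apply, tiltedMoment_innerSL_smulRight_self_apply m hp hM,
    tiltedMoment_innerSL_smulRight_one_apply m hp hM, LinearMap.coe_toContinuousLinearMap',
    Matrix.toLpLin_apply, WithLp.ofLp_toLp, Matrix.sub_mulVec, Matrix.smul_mulVec, Pi.sub_apply,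
    Pi.smul_apply, Matrix.mulVec, dotProduct, Matrix.of_apply, PiLp.inner_apply,
    Real.inner_apply, smul_eq_mul]
  rw [Finset.sum_mul, Finset.mul_sum]
  congr 1
  exact Finset.sum_congr rfl fun j _ => by ring

end Euclidean

theorem jacobian_of_tilted_mean_general
    (d : ℕ) (αs : ℝ) (Ms ms : ℝ) (hMpos : 0 < Ms)
    (p : EuclideanSpace ℝ (Fin d) → ℝ) (hp0 : ∀ x₁, 0 ≤ p x₁)
    (hppos : 0 < ∫ x₁, p x₁)
    (w : EuclideanSpace ℝ (Fin d) → EuclideanSpace ℝ (Fin d) → ℝ)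
    (hw : w = fun x₁ v => -(1 / 2) * Ms * ‖x₁‖ ^ 2 + ms * ⟪x₁, v⟫)
    (Q : EuclideanSpace ℝ (Fin d) → ℝ)
    (hQ : Q = fun v => ∫ x₁, p x₁ * Real.exp (w x₁ v))
    (R : EuclideanSpace ℝ (Fin d) → EuclideanSpace ℝ (Fin d))
    (hR : R = fun v => ∫ x₁, (p x₁ * Real.exp (w x₁ v)) • x₁)
    (P : EuclideanSpace ℝ (Fin d) → Matrix (Fin d) (Fin d) ℝ)
    (hP : P = fun v => Matrix.of fun i j => ∫ x₁, p x₁ * Real.exp (w x₁ v) * (x₁ i * x₁ j)) :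
    ∀ x₀ x : EuclideanSpace ℝ (Fin d),
      HasFDerivAt (fun y => (Q (y - αs • x₀))⁻¹ • R (y - αs • x₀))
        (LinearMap.toContinuousLinearMap (Matrix.toEuclideanLin
          ((ms / Q (x - αs • x₀) ^ 2) •
            (Q (x - αs • x₀) • P (x - αs • x₀) -
              Matrix.of fun i j => R (x - αs • x₀) i * R (x - αs • x₀) j)))) x := by
  intro x₀ x
  have hweight : ∀ x₁ v, Real.exp (w x₁ v) = tiltWeight Ms ms x₁ v := fun _ _ => by rw [hw]; rfl
  obtain rfl : Q = tiltedMoment volume p Ms ms (fun _ => (1 : ℝ)) := by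
    ext v
    simp only [hQ, hweight, tiltedMoment, smul_eq_mul, mul_one]
  obtain rfl : R = tiltedMoment volume p Ms ms id := by simp only [hR, hweight]; rfl
  obtain rfl : P = fun v =>
      Matrix.of fun i j => tiltedMoment volume p Ms ms (fun x => x i * x j) v := by
    simp only [hP, hweight]; rfl
  have hmean := (hasFDerivAt_tiltedMean ms hp0 hppos hMpos (x - αs • x₀)).comp x
    (hasFDerivAt_sub_const (αs • x₀))
  rw [ContinuousLinearMap.comp_id, tiltedCovariance_eq_toEuclideanLin ms
    (.of_integral_ne_zero hppos.ne') hMpos, ← map_smul, ← map_smul, smul_smul] at hmean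
  exact hmean

/-- Differentiability of the tilted conditional-mean map `x ↦ R(x−α_s x₀)/Q(x−α_s x₀)`
and the formula `m_s (P Q − R Rᵀ)/Q²` for its Jacobian, where `Q`, `R`, `P` are the exponentially
tilted mass, first-moment, and second-moment integrals of the density `p`. -/
theorem jacobian_of_tilted_mean
    (d : ℕ) (hd : 1 ≤ d) (s : ℝ) (hs : s ∈ Set.Ioo (0 : ℝ) 1)
    (αs βs σs : ℝ) (hβ : 0 < βs) (hσ : 0 < σs)
    (Ms ms : ℝ) (hMs : Ms = βs ^ 2 / (s * σs ^ 2)) (hms : ms = βs / (s * σs ^ 2))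
    (hMpos : 0 < Ms)
    (p : EuclideanSpace ℝ (Fin d) → ℝ) (hp0 : ∀ x₁, 0 ≤ p x₁)
    (C₁ C₂ : ℝ) (hC₁ : 0 < C₁) (hC₂ : 0 < C₂)
    (htail : ∀ x₁, p x₁ ≤ C₂ * Real.exp (-C₁ * ‖x₁‖))
    (hppos : 0 < ∫ x₁, p x₁)
    (w : EuclideanSpace ℝ (Fin d) → EuclideanSpace ℝ (Fin d) → ℝ)
    (hw : w = fun x₁ v => -(1 / 2) * Ms * ‖x₁‖ ^ 2 + ms * ⟪x₁, v⟫)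
    (Q : EuclideanSpace ℝ (Fin d) → ℝ)
    (hQ : Q = fun v => ∫ x₁, p x₁ * Real.exp (w x₁ v))
    (R : EuclideanSpace ℝ (Fin d) → EuclideanSpace ℝ (Fin d))
    (hR : R = fun v => ∫ x₁, (p x₁ * Real.exp (w x₁ v)) • x₁)
    (P : EuclideanSpace ℝ (Fin d) → Matrix (Fin d) (Fin d) ℝ)
    (hP : P = fun v => Matrix.of fun i j => ∫ x₁, p x₁ * Real.exp (w x₁ v) * (x₁ i * x₁ j)) :
    ∀ x₀ x : EuclideanSpace ℝ (Fin d),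
      HasFDerivAt (fun y => (Q (y - αs • x₀))⁻¹ • R (y - αs • x₀))
        (LinearMap.toContinuousLinearMap (Matrix.toEuclideanLin
          ((ms / Q (x - αs • x₀) ^ 2) •
            (Q (x - αs • x₀) • P (x - αs • x₀) -
              Matrix.of fun i j => R (x - αs • x₀) i * R (x - αs • x₀) j)))) x :=
  jacobian_of_tilted_mean_general d αs Ms ms hMpos p hp0 hppos w hw Q hQ R hR P hP
end
end

section
/- Fix d ≥ 1, s ∈ (0,1), reals α_s, β_s > 0, σ_s > 0, and x₀ ∈ ℝ^d. Let p : ℝ^d → [0,∞) be a probability density satisfying an exponential tail bound p(x₁) ≤ C₂ exp(−C₁|x₁|) with C₁, C₂ > 0, and assume p is not a.e. zero. Define ρ_s(x|x₀) = (2π s σ_s²)^{−d/2} ∫_{ℝ^d} p(x₁) exp(−|x−α_s x₀−β_s x₁|²/(2 s σ_s²)) dx₁. Then ρ_s(·|x₀) is strictly positive and differentiable on ℝ^d, and its score satisfies ∇_x log ρ_s(x|x₀) = −(x − α_s x₀ − β_s η₁(s,x,x₀))/(s σ_s²) for all x ∈ ℝ^d. -/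
/-!
Up to the constant `(2π s σ_s²)^{-d/2}`, `ρ_s(x|x₀)` is the Gaussian smoothing
`∫ p(a) exp(-‖y - f a‖² / c) da` at `y = x - α_s x₀`, with `f a = β_s a` and `c = 2 s σ_s²`.
It is positive because the kernel never vanishes and `p` is not a.e. zero. Since
`t exp(-t²/c) ≤ √c`, the `y`-derivative of the integrand is dominated by a multiple of `p`, so
one may differentiate under the integral sign. The score is then the chain rule for `log`; with
`e(a) = exp(-‖y - f a‖² / c)`, the first moment `∫ p(a) e(a) f a da` is finite as the difference
of the integrals of `p(a) e(a) y` and of the dominated `p(a) e(a) (y - f a)`.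
-/

open MeasureTheory

/-- The density `ρ_s(x|x₀)` of the stochastic interpolant `x_s = α_s x₀ + β_s x₁ + √s σ_s z`
with `x₁ ∼ p` and `z` standard Gaussian. -/
noncomputable def interpDensity {d : ℕ} (p : EuclideanSpace ℝ (Fin d) → ℝ) (αs βs σs s : ℝ)
    (x x₀ : EuclideanSpace ℝ (Fin d)) : ℝ :=
  (2 * Real.pi * s * σs ^ 2) ^ (-(d : ℝ) / 2) *
    ∫ x₁, p x₁ * Real.exp (-‖x - αs • x₀ - βs • x₁‖ ^ 2 / (2 * s * σs ^ 2))

open Real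

theorem Real.mul_exp_neg_sq_div_le_sqrt {c : ℝ} (hc : 0 < c) (t : ℝ) :
    t * exp (-t ^ 2 / c) ≤ √c := by
  set u := t / √c
  have hc' : 0 < √c := sqrt_pos.2 hc
  have ht : t = √c * u := by simp only [u]; field_simp
  have hu : t ^ 2 / c = u ^ 2 := by rw [ht, mul_pow, sq_sqrt hc.le]; field_simp
  have hu_le : u ≤ exp (u ^ 2) := by nlinarith [add_one_le_exp (u ^ 2)]
  calc t * exp (-t ^ 2 / c) = √c * (u * exp (-u ^ 2)) := by rw [neg_div, hu, ht]; ring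
    _ ≤ √c * (exp (u ^ 2) * exp (-u ^ 2)) := by gcongr
    _ = √c := by rw [← exp_add]; simp

section Gradient

variable {E : Type*} [NormedAddCommGroup E] [InnerProductSpace ℝ E] [CompleteSpace E]

theorem HasGradientAt.const_add {f : E → ℝ} {g x : E} (r : ℝ) (h : HasGradientAt f g x) :
    HasGradientAt (fun y => r + f y) g x :=
  hasGradientAt_iff_hasFDerivAt.2 ((hasGradientAt_iff_hasFDerivAt.1 h).const_add r)

theorem HasGradientAt.comp_sub_const {f : E → ℝ} {g x : E} (v : E)
    (h : HasGradientAt f g (x - v)) : HasGradientAt (fun y => f (y - v)) g x := by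
  rw [hasGradientAt_iff_hasFDerivAt] at h ⊢
  exact h.comp x (hasFDerivAt_sub_const v)

theorem hasGradientAt_exp_neg_norm_sub_sq_div (c : ℝ) (y x : E) :
    HasGradientAt (fun x => exp (-‖x - y‖ ^ 2 / c))
      ((-(2 / c) * exp (-‖x - y‖ ^ 2 / c)) • (x - y)) x := by
  have h := (((hasFDerivAt_id x).sub_const y).norm_sq.mul_const (-1 / c)).exp
  have hfun : (fun x => exp (‖id x - y‖ ^ 2 * (-1 / c))) = fun x => exp (-‖x - y‖ ^ 2 / c) := by
    ext z; simp only [id]; ring_nf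
  rw [hfun] at h
  refine h.congr_fderiv ?_
  ext v
  simp only [id_eq, map_sub, ContinuousLinearMap.comp_id, smul_apply, sub_apply, coe_innerSL_apply,
    nsmul_eq_mul, Nat.cast_ofNat, smul_eq_mul, neg_mul, neg_smul, map_neg, map_smul, neg_apply,
    InnerProductSpace.toDual_apply_apply]
  ring_nf

end Gradient

section GaussSmooth

variable {α E : Type*} [MeasurableSpace α] {μ : Measure α} [NormedAddCommGroup E]
  {p : α → ℝ} {f : α → E} {c : ℝ}

noncomputable def gaussSmooth (μ : Measure α) (p : α → ℝ) (f : α → E) (c : ℝ) (x : E) : ℝ :=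
  ∫ a, p a * exp (-‖x - f a‖ ^ 2 / c) ∂μ

theorem aestronglyMeasurable_exp_neg_norm_sub_sq_div (hf : AEStronglyMeasurable f μ)
    (c : ℝ) (x : E) : AEStronglyMeasurable (fun a => exp (-‖x - f a‖ ^ 2 / c)) μ :=
  (by fun_prop : Continuous fun v : E => exp (-‖x - v‖ ^ 2 / c)).comp_aestronglyMeasurable hf

theorem integrable_mul_exp_neg_norm_sub_sq_div (hp : Integrable p μ)
    (hf : AEStronglyMeasurable f μ) (hc : 0 ≤ c) (x : E) :
    Integrable (fun a => p a * exp (-‖x - f a‖ ^ 2 / c)) μ := by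
  refine hp.mul_bdd (c := 1) (aestronglyMeasurable_exp_neg_norm_sub_sq_div hf c x)
    (ae_of_all _ fun a => ?_)
  rw [norm_of_nonneg (exp_pos _).le, exp_le_one_iff]
  exact div_nonpos_of_nonpos_of_nonneg (neg_nonpos.2 (sq_nonneg _)) hc

theorem gaussSmooth_pos (hp0 : 0 ≤ p) (hp : Integrable p μ) (hpne : ¬ p =ᵐ[μ] 0)
    (hf : AEStronglyMeasurable f μ) (hc : 0 ≤ c) (x : E) : 0 < gaussSmooth μ p f c x := by
  have hsupp : Function.support (fun a => p a * exp (-‖x - f a‖ ^ 2 / c)) =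
      Function.support p :=
    Function.support_mul_of_ne_zero_right _ fun a => (exp_pos _).ne'
  rw [gaussSmooth, integral_pos_iff_support_of_nonneg (fun a => mul_nonneg (hp0 a) (exp_pos _).le)
    (integrable_mul_exp_neg_norm_sub_sq_div hp hf hc x), hsupp, pos_iff_ne_zero]
  exact (μ.measure_support_eq_zero_iff).not.2 hpne

theorem integrable_mul_exp_neg_norm_sub_sq_div_smul [NormedSpace ℝ E] (hp : Integrable p μ)
    (hf : AEStronglyMeasurable f μ) (hc : 0 < c) (x : E) :
    Integrable (fun a => (p a * exp (-‖x - f a‖ ^ 2 / c)) • (x - f a)) μ := by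
  refine (hp.norm.mul_const √c).mono' ?_ (ae_of_all _ fun a => ?_)
  · exact (hp.1.mul (aestronglyMeasurable_exp_neg_norm_sub_sq_div hf c x)).smul
      (aestronglyMeasurable_const.sub hf)
  · rw [norm_smul, norm_mul, norm_of_nonneg (exp_pos _).le, mul_assoc, mul_comm (exp _)]
    gcongr
    exact mul_exp_neg_sq_div_le_sqrt hc _

variable [InnerProductSpace ℝ E] [CompleteSpace E]

theorem hasGradientAt_gaussSmooth (hp : Integrable p μ) (hf : AEStronglyMeasurable f μ)
    (hc : 0 < c) (x : E) :
    HasGradientAt (gaussSmooth μ p f c)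
      (-(2 / c) • ∫ a, (p a * exp (-‖x - f a‖ ^ 2 / c)) • (x - f a) ∂μ) x := by
  set g : E → α → E := fun y a => (-(2 / c) * (p a * exp (-‖y - f a‖ ^ 2 / c))) • (y - f a)
  have hg_int : Integrable (g x) μ := by
    refine ((integrable_mul_exp_neg_norm_sub_sq_div_smul hp hf hc x).smul (-(2 / c))).congr
      (ae_of_all _ fun a => ?_)
    simp only [g, Pi.smul_apply, smul_smul]
  have hg_le : ∀ y a, ‖g y a‖ ≤ 2 / c * √c * ‖p a‖ := fun y a => by
    rw [norm_smul, norm_mul, norm_mul, norm_neg, norm_of_nonneg (exp_pos _).le,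
      norm_of_nonneg (by positivity : 0 ≤ 2 / c)]
    have hkernel := mul_exp_neg_sq_div_le_sqrt hc ‖y - f a‖
    calc 2 / c * (‖p a‖ * exp (-‖y - f a‖ ^ 2 / c)) * ‖y - f a‖
        = 2 / c * ‖p a‖ * (‖y - f a‖ * exp (-‖y - f a‖ ^ 2 / c)) := by ring
      _ ≤ 2 / c * ‖p a‖ * √c := by gcongr
      _ = 2 / c * √c * ‖p a‖ := by ring
  have hderiv : ∀ a y, HasFDerivAt (fun z => p a * exp (-‖z - f a‖ ^ 2 / c))
      (innerSL ℝ (g y a)) y := fun a y => by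
    refine ((hasGradientAt_exp_neg_norm_sub_sq_div c (f a) y).hasFDerivAt.const_mul
      (p a)).congr_fderiv ?_
    ext v
    simp only [neg_mul, neg_smul, map_neg, map_smul, map_sub, smul_neg, neg_apply, smul_apply,
      sub_apply, InnerProductSpace.toDual_apply_apply, smul_eq_mul, coe_innerSL_apply, neg_inj, g]
    ring
  have key := hasFDerivAt_integral_of_dominated_of_fderiv_le (μ := μ) (x₀ := x) Filter.univ_mem
    (.of_forall fun y => hp.1.mul (aestronglyMeasurable_exp_neg_norm_sub_sq_div hf c y))
    (integrable_mul_exp_neg_norm_sub_sq_div hp hf hc.le x)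
    ((innerSL ℝ).continuous.comp_aestronglyMeasurable hg_int.1)
    (ae_of_all _ fun a y _ => (innerSL_apply_norm ℝ (g y a)).trans_le (hg_le y a))
    (hp.norm.const_mul _) (ae_of_all _ fun a y _ => hderiv a y)
  have hg_eq : ∫ a, g x a ∂μ =
      -(2 / c) • ∫ a, (p a * exp (-‖x - f a‖ ^ 2 / c)) • (x - f a) ∂μ := by
    simp only [g, ← smul_smul, integral_smul]
  rw [(innerSL ℝ).integral_comp_comm hg_int, hg_eq] at key
  exact key

theorem hasGradientAt_log_gaussSmooth (hp0 : 0 ≤ p) (hp : Integrable p μ) (hpne : ¬ p =ᵐ[μ] 0)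
    (hf : AEStronglyMeasurable f μ) (hc : 0 < c) (x : E) :
    HasGradientAt (fun y => log (gaussSmooth μ p f c y))
      (-(2 / c) • (x - (gaussSmooth μ p f c x)⁻¹ •
        ∫ a, (p a * exp (-‖x - f a‖ ^ 2 / c)) • f a ∂μ)) x := by
  have hZ : gaussSmooth μ p f c x ≠ 0 := (gaussSmooth_pos hp0 hp hpne hf hc.le x).ne'
  have hmean : ∫ a, (p a * exp (-‖x - f a‖ ^ 2 / c)) • f a ∂μ =
      gaussSmooth μ p f c x • x - ∫ a, (p a * exp (-‖x - f a‖ ^ 2 / c)) • (x - f a) ∂μ := by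
    have hsplit : (fun a => (p a * exp (-‖x - f a‖ ^ 2 / c)) • f a) = fun a =>
        (p a * exp (-‖x - f a‖ ^ 2 / c)) • x - (p a * exp (-‖x - f a‖ ^ 2 / c)) • (x - f a) := by
      ext a; rw [smul_sub, sub_sub_cancel]
    rw [hsplit, integral_sub ((integrable_mul_exp_neg_norm_sub_sq_div hp hf hc.le x).smul_const x)
      (integrable_mul_exp_neg_norm_sub_sq_div_smul hp hf hc x), integral_smul_const]
    rfl
  have h := (hasGradientAt_gaussSmooth hp hf hc x).hasFDerivAt.log hZ
  refine h.congr_fderiv ?_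
  ext v
  simp only [neg_smul, map_neg, map_smul, smul_neg, neg_apply, smul_apply,
    InnerProductSpace.toDual_apply_apply, smul_eq_mul, hmean, map_sub, sub_apply, neg_inj]
  field_simp
  ring

end GaussSmooth

theorem score_of_interp_density_general
    (d : ℕ) (s : ℝ) (hs : s ∈ Set.Ioo (0 : ℝ) 1)
    (αs βs σs : ℝ) (hσ : 0 < σs)
    (x₀ : EuclideanSpace ℝ (Fin d))
    (p : EuclideanSpace ℝ (Fin d) → ℝ) (hp0 : ∀ x₁, 0 ≤ p x₁)
    (hpd : ∫ x₁, p x₁ = 1)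
    (hpne : ¬ (∀ᵐ x₁, p x₁ = 0)) :
    (∀ x, 0 < interpDensity p αs βs σs s x x₀) ∧
    Differentiable ℝ (fun x => interpDensity p αs βs σs s x x₀) ∧
    (∀ x, gradient (fun y => Real.log (interpDensity p αs βs σs s y x₀)) x
      = (-(1 / (s * σs ^ 2))) • (x - αs • x₀ - βs • eta1 p αs βs σs s x x₀)) := by
  obtain ⟨hs0, -⟩ := hs
  have hc : 0 < 2 * s * σs ^ 2 := by positivity
  have hp : Integrable p := .of_integral_ne_zero (by simp [hpd])
  have hf : AEStronglyMeasurable (fun x₁ : EuclideanSpace ℝ (Fin d) => βs • x₁) := by fun_prop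
  have hK : 0 < (2 * π * s * σs ^ 2) ^ (-(d : ℝ) / 2) := by positivity
  have hF_pos := gaussSmooth_pos hp0 hp hpne hf hc.le
  refine ⟨fun x => mul_pos hK (hF_pos _), fun x => ?_, fun x => ?_⟩
  · exact (((hasGradientAt_gaussSmooth hp hf hc _).differentiableAt).comp x
      (differentiableAt_id.sub_const _)).const_mul _
  · have hlog : (fun y => log (interpDensity p αs βs σs s y x₀)) = fun y =>
        log ((2 * π * s * σs ^ 2) ^ (-(d : ℝ) / 2)) +
          log (gaussSmooth volume p (βs • ·) (2 * s * σs ^ 2) (y - αs • x₀)) :=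
      funext fun y => log_mul hK.ne' (hF_pos _).ne'
    rw [hlog, (((hasGradientAt_log_gaussSmooth hp0 hp hpne hf hc _).comp_sub_const _).const_add
      _).gradient]
    simp only [smul_comm _ βs, integral_smul]
    congr 1
    field_simp

/-- The interpolant density `ρ_s(·|x₀)` is strictly positive and differentiable,
and its score is `∇_x log ρ_s(x|x₀) = −(x − α_s x₀ − β_s η₁(s,x,x₀))/(s σ_s²)`. -/
theorem score_of_interp_density
    (d : ℕ) (hd : 1 ≤ d) (s : ℝ) (hs : s ∈ Set.Ioo (0 : ℝ) 1)
    (αs βs σs : ℝ) (hβ : 0 < βs) (hσ : 0 < σs)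
    (x₀ : EuclideanSpace ℝ (Fin d))
    (p : EuclideanSpace ℝ (Fin d) → ℝ) (hp0 : ∀ x₁, 0 ≤ p x₁)
    (hpd : ∫ x₁, p x₁ = 1)
    (C₁ C₂ : ℝ) (hC₁ : 0 < C₁) (hC₂ : 0 < C₂)
    (htail : ∀ x₁, p x₁ ≤ C₂ * Real.exp (-C₁ * ‖x₁‖))
    (hpne : ¬ (∀ᵐ x₁, p x₁ = 0)) :
    (∀ x, 0 < interpDensity p αs βs σs s x x₀) ∧
    Differentiable ℝ (fun x => interpDensity p αs βs σs s x x₀) ∧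
    (∀ x, gradient (fun y => Real.log (interpDensity p αs βs σs s y x₀)) x
      = (-(1 / (s * σs ^ 2))) • (x - αs • x₀ - βs • eta1 p αs βs σs s x x₀)) :=
  score_of_interp_density_general d s hs αs βs σs hσ x₀ p hp0 hpd hpne
end

section
/- Let A > 0, β > 0 and σ ≥ 0 be real numbers, and define f(g) = (1 + ½βA(g² − σ²))²/g² for g > 0. Then for all g > 0, f(g) ≥ 2βA·max(0, 1 − ½βAσ²). Moreover, if 1 − ½βAσ² ≠ 0, then equality holds if and only if g² = |1 − ½βAσ²|/(½βA). -/
/-! With `c = ½βA`, `d = 1 − ½βAσ²` and `x = g²` the integrand is `(d + c x)² / x`, and completing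
the square gives `(d + c x)² = 4c·max(0, d)·x + (|d| − c x)²` for every sign of `d`. Hence the integrand
is `4c·max(0, d)` plus a nonnegative remainder that vanishes exactly when `c x = |d|`. -/

namespace KLIntegrand

theorem sq_add_mul_eq (c d x : ℝ) :
    (d + c * x) ^ 2 = 4 * c * max 0 d * x + (|d| - c * x) ^ 2 := by
  rcases le_total d 0 with hd | hd
  · rw [max_eq_left hd, abs_of_nonpos hd]
    ring
  · rw [max_eq_right hd, abs_of_nonneg hd]
    ring

theorem sq_add_mul_div_eq {x : ℝ} (hx : x ≠ 0) (c d : ℝ) :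
    (d + c * x) ^ 2 / x = 4 * c * max 0 d + (|d| - c * x) ^ 2 / x := by
  rw [sq_add_mul_eq, add_div, mul_div_cancel_right₀ _ hx]

theorem le_sq_add_mul_div {x : ℝ} (hx : 0 < x) (c d : ℝ) :
    4 * c * max 0 d ≤ (d + c * x) ^ 2 / x := by
  rw [sq_add_mul_div_eq hx.ne']
  exact le_add_of_nonneg_right (by positivity)

theorem sq_add_mul_div_eq_iff {x c : ℝ} (hx : x ≠ 0) (hc : c ≠ 0) (d : ℝ) :
    (d + c * x) ^ 2 / x = 4 * c * max 0 d ↔ x = |d| / c := by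
  rw [sq_add_mul_div_eq hx, add_eq_left, div_eq_zero_iff, or_iff_left hx, sq_eq_zero_iff,
    sub_eq_zero, eq_div_iff hc, mul_comm, eq_comm]

end KLIntegrand

theorem kl_integrand_min_general
    (A β σ : ℝ) (hA : 0 < A) (hβ : 0 < β) :
    (∀ g : ℝ, 0 < g →
      2 * β * A * max 0 (1 - β * A * σ ^ 2 / 2)
        ≤ (1 + β * A / 2 * (g ^ 2 - σ ^ 2)) ^ 2 / g ^ 2) ∧
    (1 - β * A * σ ^ 2 / 2 ≠ 0 →
      ∀ g : ℝ, 0 < g →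
        ((1 + β * A / 2 * (g ^ 2 - σ ^ 2)) ^ 2 / g ^ 2
            = 2 * β * A * max 0 (1 - β * A * σ ^ 2 / 2)
          ↔ g ^ 2 = |1 - β * A * σ ^ 2 / 2| / (β * A / 2))) := by
  have h_integrand : ∀ g : ℝ, 1 + β * A / 2 * (g ^ 2 - σ ^ 2)
      = (1 - β * A * σ ^ 2 / 2) + β * A / 2 * g ^ 2 := fun g => by ring
  have h_const : 2 * β * A = 4 * (β * A / 2) := by ring
  have hc : β * A / 2 ≠ 0 := by positivity
  simp only [h_integrand, h_const]
  exact ⟨fun g hg => KLIntegrand.le_sq_add_mul_div (by positivity) _ _,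
    fun _ g hg => KLIntegrand.sq_add_mul_div_eq_iff (by positivity) hc _⟩

/-- Pointwise minimization of the KL integrand over the diffusion coefficient:
for `A, β > 0`, `σ ≥ 0` and `f(g) = (1 + ½βA(g² − σ²))²/g²`, one has
`f(g) ≥ 2βA·max(0, 1 − ½βAσ²)` for all `g > 0`, with equality (when `1 − ½βAσ² ≠ 0`) iff
`g² = |1 − ½βAσ²|/(½βA)`. -/
theorem kl_integrand_min
    (A β σ : ℝ) (hA : 0 < A) (hβ : 0 < β) (hσ : 0 ≤ σ) :
    (∀ g : ℝ, 0 < g →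
      2 * β * A * max 0 (1 - β * A * σ ^ 2 / 2)
        ≤ (1 + β * A / 2 * (g ^ 2 - σ ^ 2)) ^ 2 / g ^ 2) ∧
    (1 - β * A * σ ^ 2 / 2 ≠ 0 →
      ∀ g : ℝ, 0 < g →
        ((1 + β * A / 2 * (g ^ 2 - σ ^ 2)) ^ 2 / g ^ 2
            = 2 * β * A * max 0 (1 - β * A * σ ^ 2 / 2)
          ↔ g ^ 2 = |1 - β * A * σ ^ 2 / 2| / (β * A / 2))) :=
  kl_integrand_min_general A β σ hA hβ
end
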